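/- arXiv:2602.18849 — 2 statements merged into one kernel-verified Lean document; each statement's English description precedes it below -/
import Mathlib

section
/- Let p ∈ Δ^{L−1}, τ > 0, and J = (1/τ)(Diag(p) − p pᵀ). For any x ∈ {−1,+1}^L with S = {i : x_i = +1}, the ℓ1 norm of Jx equals (4/τ)·p(S)(1−p(S)). -/
open Finset

/-- For a probability vector `p`, temperature `τ > 0`, and the softmax Jacobian
`J = (1/τ)(Diag p − p pᵀ)`, every sign vector `x ∈ {±1}^L` with positive support `S`
satisfies `‖Jx‖₁ = (4/τ)·p(S)(1−p(S))`. -/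
theorem softmax_jacobian_l1_on_sign_vectors
    (L : ℕ) (p : Fin L → ℝ)
    (hp_nonneg : ∀ i, 0 ≤ p i) (hp_sum : ∑ i, p i = 1)
    (τ : ℝ) (hτ : 0 < τ)
    (x : Fin L → ℝ) (hx : ∀ i, x i = 1 ∨ x i = -1) :
    let J : Matrix (Fin L) (Fin L) ℝ :=
      τ⁻¹ • (Matrix.diagonal p - Matrix.vecMulVec p p)
    let S : Finset (Fin L) := Finset.univ.filter (fun i => x i = 1)
    ∑ i, |J.mulVec x i| = (4 / τ) * (∑ i ∈ S, p i) * (1 - ∑ i ∈ S, p i) := by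
  intro J S
  set s : ℝ := ∑ i ∈ S, p i with hs
  have hs0 : 0 ≤ s := Finset.sum_nonneg fun i _ => hp_nonneg i
  have hs1 : s ≤ 1 := by
    rw [← hp_sum]
    exact Finset.sum_le_sum_of_subset_of_nonneg (Finset.filter_subset _ _)
      (fun i _ _ => hp_nonneg i)
  have hdot : ∑ j, p j * x j = 2 * s - 1 := by
    have hsplit := Finset.sum_filter_add_sum_filter_not Finset.univ
      (fun i => x i = 1) (fun j => p j * x j)
    have h1 : ∑ j ∈ Finset.univ.filter (fun i => x i = 1), p j * x j = s := by
      apply Finset.sum_congr rfl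
      intro j hj
      rw [(Finset.mem_filter.mp hj).2, mul_one]
    have h2 : ∑ j ∈ Finset.univ.filter (fun i => ¬ x i = 1), p j * x j
        = -(1 - s) := by
      have : ∑ j ∈ Finset.univ.filter (fun i => ¬ x i = 1), p j * x j
          = -∑ j ∈ Finset.univ.filter (fun i => ¬ x i = 1), p j := by
        rw [← Finset.sum_neg_distrib]
        apply Finset.sum_congr rfl
        intro j hj
        have := (Finset.mem_filter.mp hj).2
        rcases hx j with h | h
        · exact absurd h this
        · rw [h]; ring
      rw [this]
      have := Finset.sum_filter_add_sum_filter_not Finset.univ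
        (fun i => x i = 1) p
      rw [hp_sum] at this
      have : ∑ j ∈ Finset.univ.filter (fun i => ¬ x i = 1), p j = 1 - s := by
        linarith
      rw [this]
    rw [h1, h2] at hsplit
    linarith
  have hval : ∀ i, J.mulVec x i = τ⁻¹ * (p i * (x i - (2 * s - 1))) := by
    intro i
    simp only [J, Matrix.smul_mulVec, Matrix.sub_mulVec, Pi.smul_apply,
      Pi.sub_apply, Matrix.mulVec_diagonal, smul_eq_mul]
    have : (Matrix.vecMulVec p p).mulVec x i = p i * (2 * s - 1) := by
      simp only [Matrix.mulVec, Matrix.vecMulVec_apply, dotProduct]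
      rw [← hdot, Finset.mul_sum]
      exact Finset.sum_congr rfl fun j _ => by ring
    rw [this]
    ring
  have habs : ∀ i, |J.mulVec x i|
      = τ⁻¹ * (2 * p i * (if x i = 1 then 1 - s else s)) := by
    intro i
    rw [hval i]
    rcases hx i with h | h
    · rw [if_pos h, h]
      rw [abs_of_nonneg]
      · ring
      · have : τ⁻¹ * (p i * (1 - (2 * s - 1))) = τ⁻¹ * (p i * (2 * (1 - s))) := by ring
        rw [this]
        exact mul_nonneg (inv_nonneg.mpr hτ.le)
          (mul_nonneg (hp_nonneg i) (by linarith))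
    · have hne : ¬ x i = 1 := by rw [h]; norm_num
      rw [if_neg hne, h]
      have : τ⁻¹ * (p i * (-1 - (2 * s - 1))) = -(τ⁻¹ * (2 * p i * s)) := by ring
      rw [this, abs_neg, abs_of_nonneg (mul_nonneg (inv_nonneg.mpr hτ.le)
        (mul_nonneg (mul_nonneg (by norm_num) (hp_nonneg i)) hs0))]
  calc ∑ i, |J.mulVec x i|
      = ∑ i, τ⁻¹ * (2 * p i * (if x i = 1 then 1 - s else s)) := by
        exact Finset.sum_congr rfl fun i _ => habs i
    _ = (4 / τ) * s * (1 - s) := by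
        have hcompl : ∑ j ∈ Finset.univ.filter (fun i => ¬ x i = 1), p j = 1 - s := by
          have h := Finset.sum_filter_add_sum_filter_not Finset.univ
            (fun i => x i = 1) p
          rw [hp_sum] at h
          linarith
        have hsplit := Finset.sum_filter_add_sum_filter_not Finset.univ
          (fun i => x i = 1)
          (fun i => τ⁻¹ * (2 * p i * (if x i = 1 then 1 - s else s)))
        rw [← hsplit]
        have h1 : ∑ i ∈ Finset.univ.filter (fun i => x i = 1),
            τ⁻¹ * (2 * p i * (if x i = 1 then 1 - s else s))
            = τ⁻¹ * 2 * (1 - s) * s := by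
          have : ∀ i ∈ Finset.univ.filter (fun i : Fin L => x i = 1),
              τ⁻¹ * (2 * p i * (if x i = 1 then 1 - s else s))
              = τ⁻¹ * 2 * (1 - s) * p i := by
            intro i hi
            rw [if_pos (Finset.mem_filter.mp hi).2]; ring
          rw [Finset.sum_congr rfl this, ← Finset.mul_sum]
        have h2 : ∑ i ∈ Finset.univ.filter (fun i => ¬ x i = 1),
            τ⁻¹ * (2 * p i * (if x i = 1 then 1 - s else s))
            = τ⁻¹ * 2 * s * (1 - s) := by
          have : ∀ i ∈ Finset.univ.filter (fun i : Fin L => ¬ x i = 1),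
              τ⁻¹ * (2 * p i * (if x i = 1 then 1 - s else s))
              = τ⁻¹ * 2 * s * p i := by
            intro i hi
            rw [if_neg (Finset.mem_filter.mp hi).2]; ring
          rw [Finset.sum_congr rfl this, ← Finset.mul_sum, hcompl]
        rw [h1, h2]
        field_simp
        ring
end

section
/- Let p ∈ Δ^{L−1}, τ > 0, and J = (1/τ)(Diag(p) − p pᵀ). Then the operator norm of J from ℓ∞ to ℓ1, i.e., max over ‖x‖_∞ ≤ 1 of ‖Jx‖_1, equals θ(p)/τ, where θ(p) = 4·max_{S⊆[L]} p(S)(1−p(S)). -/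
open Finset

/-- The balanced-mass factor `θ(p) = 4 · max_{S ⊆ [L]} p(S)(1 − p(S))`. -/
noncomputable def theta {L : ℕ} (p : Fin L → ℝ) : ℝ :=
  Finset.univ.powerset.sup' ⟨∅, Finset.empty_mem_powerset _⟩
    (fun S => 4 * (∑ i ∈ S, p i) * (1 - ∑ i ∈ S, p i))

private lemma mulVec_eq (L : ℕ) (p : Fin L → ℝ) (τ : ℝ) (x : Fin L → ℝ) (i : Fin L) :
    (τ⁻¹ • (Matrix.diagonal p - Matrix.vecMulVec p p)).mulVec x i
      = τ⁻¹ * (p i * (x i - ∑ j, p j * x j)) := by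
  simp [Matrix.mulVec, dotProduct, Matrix.diagonal_apply, Matrix.vecMulVec_apply,
    sub_mul, Finset.sum_sub_distrib, mul_sub, Finset.mul_sum, ite_mul]
  ring_nf

private lemma sum_abs_eq (L : ℕ) (p : Fin L → ℝ) (hp : ∀ i, 0 ≤ p i)
    (τ : ℝ) (hτ : 0 < τ) (x : Fin L → ℝ) :
    ∑ i, |(τ⁻¹ • (Matrix.diagonal p - Matrix.vecMulVec p p)).mulVec x i|
      = τ⁻¹ * ∑ i, p i * |x i - ∑ j, p j * x j| := by
  rw [Finset.mul_sum]
  refine Finset.sum_congr rfl fun i _ => ?_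
  rw [mulVec_eq, abs_mul, abs_mul, abs_of_nonneg (by positivity), abs_of_nonneg (hp i)]

/-- value at a vertex -/
private lemma vertex_value (L : ℕ) (p : Fin L → ℝ) (hp : ∀ i, 0 ≤ p i)
    (hp_sum : ∑ i, p i = 1) (S : Finset (Fin L)) :
    ∑ i, p i * |(if i ∈ S then (1:ℝ) else -1) - ∑ j, p j * (if j ∈ S then (1:ℝ) else -1)|
      = 4 * (∑ i ∈ S, p i) * (1 - ∑ i ∈ S, p i) := by
  set s := ∑ i ∈ S, p i with hs
  have hs0 : 0 ≤ s := Finset.sum_nonneg fun i _ => hp i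
  have hs1 : s ≤ 1 := by
    rw [← hp_sum]
    exact Finset.sum_le_sum_of_subset_of_nonneg (Finset.subset_univ S) (fun i _ _ => hp i)
  have hm : ∑ j, p j * (if j ∈ S then (1:ℝ) else -1) = 2 * s - 1 := by
    have : ∀ j, p j * (if j ∈ S then (1:ℝ) else -1)
        = (if j ∈ S then p j else 0) * 2 - p j := by
      intro j; split <;> ring
    simp only [this, Finset.sum_sub_distrib]
    rw [← Finset.sum_mul, Finset.sum_ite_mem, Finset.univ_inter, hp_sum, ← hs]
    ring
  rw [hm]
  have split : ∀ i, p i * |(if i ∈ S then (1:ℝ) else -1) - (2 * s - 1)|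
      = (if i ∈ S then p i * (2 * (1 - s)) else p i * (2 * s)) := by
    intro i
    split
    · rw [abs_of_nonneg (by linarith)]; ring_nf
    · rw [abs_of_nonpos (by linarith)]; ring_nf
  simp only [split]
  rw [Finset.sum_ite, ← Finset.sum_mul, ← Finset.sum_mul]
  have h2 : ∑ i ∈ Sᶜ, p i = 1 - s := by
    have h := Finset.sum_add_sum_compl S p
    rw [hp_sum] at h; linarith
  have hf1 : Finset.filter (fun x => x ∈ S) univ = S := by ext; simp
  have hf2 : Finset.filter (fun x => x ∉ S) univ = Sᶜ := by ext; simp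
  rw [hf1, hf2, h2, ← hs]; ring

private lemma bound_lemma (L : ℕ) (p : Fin L → ℝ) (hp : ∀ i, 0 ≤ p i)
    (hp_sum : ∑ i, p i = 1) (x : Fin L → ℝ) (hx : ∀ i, |x i| ≤ 1) :
    ∑ i, p i * |x i - ∑ j, p j * x j| ≤ theta p := by
  set m := ∑ j, p j * x j with hm
  set S := Finset.univ.filter (fun i => m ≤ x i) with hS
  set s := ∑ i ∈ S, p i with hs
  set t := ∑ i ∈ S, p i * x i with ht
  have hs0 : 0 ≤ s := Finset.sum_nonneg fun i _ => hp i
  have hs1 : s ≤ 1 := by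
    rw [← hp_sum]
    exact Finset.sum_le_sum_of_subset_of_nonneg (Finset.subset_univ S) fun i _ _ => hp i
  have hzero : ∑ i, p i * (x i - m) = 0 := by
    simp only [mul_sub, Finset.sum_sub_distrib, ← Finset.sum_mul, hp_sum, ← hm]
    ring
  have hSsum : ∑ i ∈ S, p i * (x i - m) = t - s * m := by
    simp only [mul_sub, Finset.sum_sub_distrib, ← Finset.sum_mul, ← ht, ← hs]
  have h1 : ∑ i ∈ S, p i * |x i - m| = t - s * m := by
    rw [← hSsum]
    refine Finset.sum_congr rfl fun i hi => ?_
    rw [hS, Finset.mem_filter] at hi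
    rw [abs_of_nonneg (by linarith [hi.2])]
  have h2 : ∑ i ∈ Sᶜ, p i * |x i - m| = t - s * m := by
    have e1 : ∑ i ∈ Sᶜ, p i * |x i - m| = ∑ i ∈ Sᶜ, -(p i * (x i - m)) := by
      refine Finset.sum_congr rfl fun i hi => ?_
      have : ¬ m ≤ x i := by simpa [hS] using Finset.mem_compl.mp hi
      rw [abs_of_neg (by linarith)]
      ring
    have e2 := Finset.sum_add_sum_compl S (fun i => p i * (x i - m))
    rw [hzero, hSsum] at e2
    rw [e1, Finset.sum_neg_distrib]
    linarith
  have key : ∑ i, p i * |x i - m| = 2 * (t - s * m) := by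
    have := Finset.sum_add_sum_compl S (fun i => p i * |x i - m|)
    rw [h1, h2] at this
    linarith
  have hts : t ≤ s := by
    refine Finset.sum_le_sum fun i _ => ?_
    have := (abs_le.mp (hx i)).2
    nlinarith [hp i]
  have hmt : t - (1 - s) ≤ m := by
    have e2 := Finset.sum_add_sum_compl S (fun i => p i * x i)
    have hc : ∑ i ∈ Sᶜ, p i = 1 - s := by
      have := Finset.sum_add_sum_compl S p
      rw [hp_sum] at this; linarith
    have hlow : -(1 - s) ≤ ∑ i ∈ Sᶜ, p i * x i := by
      rw [← hc, ← Finset.sum_neg_distrib]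
      refine Finset.sum_le_sum fun i _ => ?_
      have := (abs_le.mp (hx i)).1
      nlinarith [hp i]
    rw [← ht, ← hm] at e2
    linarith
  have hbound : ∑ i, p i * |x i - m| ≤ 4 * s * (1 - s) := by
    rw [key]
    nlinarith [mul_le_mul_of_nonneg_left hmt hs0, mul_nonneg hs0 (by linarith : (0:ℝ) ≤ 1 - s)]
  refine hbound.trans ?_
  rw [hs]
  exact Finset.le_sup' (f := fun S => 4 * (∑ i ∈ S, p i) * (1 - ∑ i ∈ S, p i))
    (Finset.mem_powerset.mpr (Finset.subset_univ S))

/-- Exact softmax Jacobian norm: the maximum of `‖Jx‖₁` over the `ℓ∞` unit ball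
equals `θ(p)/τ`, where `J = (1/τ)(Diag p − p pᵀ)`. -/
theorem softmax_jacobian_opNorm_eq
    (L : ℕ) (p : Fin L → ℝ)
    (hp_nonneg : ∀ i, 0 ≤ p i) (hp_sum : ∑ i, p i = 1)
    (τ : ℝ) (hτ : 0 < τ) :
    let J : Matrix (Fin L) (Fin L) ℝ :=
      τ⁻¹ • (Matrix.diagonal p - Matrix.vecMulVec p p)
    IsGreatest {y : ℝ | ∃ x : Fin L → ℝ, (∀ i, |x i| ≤ 1) ∧ y = ∑ i, |J.mulVec x i|}
      (theta p / τ) := by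
  intro J
  have hJ : J = τ⁻¹ • (Matrix.diagonal p - Matrix.vecMulVec p p) := rfl
  constructor
  · obtain ⟨S, hSmem, hSval⟩ := Finset.exists_mem_eq_sup'
      (⟨∅, Finset.empty_mem_powerset _⟩ : ((Finset.univ : Finset (Fin L)).powerset).Nonempty)
      (fun S => 4 * (∑ i ∈ S, p i) * (1 - ∑ i ∈ S, p i))
    refine ⟨fun i => if i ∈ S then 1 else -1, fun i => by simp only []; split <;> norm_num, ?_⟩
    rw [hJ, sum_abs_eq L p hp_nonneg τ hτ, vertex_value L p hp_nonneg hp_sum S]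
    rw [div_eq_inv_mul, theta, hSval]
  · rintro y ⟨x, hx, rfl⟩
    rw [hJ, sum_abs_eq L p hp_nonneg τ hτ, div_eq_inv_mul]
    exact mul_le_mul_of_nonneg_left (bound_lemma L p hp_nonneg hp_sum x hx) (by positivity)
end
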